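/- Let N ≥ 1 and let f : ℂ^N → ℂ^N be a regular endomorphism of algebraic degree d ≥ 2. Then the set of f-preperiodic points in ℂ^N is bounded: there exists R > 0 such that every f-preperiodic point x ∈ ℂ^N satisfies ‖x‖ ≤ R. -/

import Mathlib

/-!
Write `f = f⁺ + g`, with `f⁺` the top-degree part. Since `f⁺` is homogeneous of degree `d` and
vanishes only at `0`, compactness of the unit sphere gives `‖f⁺ z‖ ≥ c ‖z‖ ^ d` with `c > 0`,
while `‖g z‖ ≤ C ‖z‖ ^ (d - 1)` for `‖z‖ ≥ 1`. As `d ≥ 2`, this forces `‖f z‖ > ‖z‖` once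
`‖z‖ ≥ R`, so the norms along the orbit of such a point strictly increase and it cannot be
preperiodic.
-/

noncomputable section

/-- The house `C(α)` of an algebraic number `α ∈ ℂ`: the maximum of the absolute values of
the complex roots of its minimal polynomial over `ℚ` (equivalently, of `σ(α)` over all
embeddings `σ : ℚ(α) ↪ ℂ`). -/
def house (α : ℂ) : ℝ :=
  sSup ((fun z : ℂ => ‖z‖) '' {β : ℂ | Polynomial.aeval β (minpoly ℚ α) = 0})

/-- The self-map of `𝔸^N(ℂ)` induced by an `N`-tuple of polynomials. -/
def evalMap {N : ℕ} (f : Fin N → MvPolynomial (Fin N) ℂ) (z : Fin N → ℂ) : Fin N → ℂ :=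
  fun i => MvPolynomial.eval z (f i)

/-- A polynomial has all of its coefficients in the subfield `K` of `ℂ`. -/
def CoeffsIn {n : ℕ} (K : Subfield ℂ) (p : MvPolynomial (Fin n) ℂ) : Prop :=
  ∀ m, MvPolynomial.coeff m p ∈ K

/-- `z` is preperiodic under `F`. -/
def IsPreperiodicPt {X : Type*} (F : X → X) (z : X) : Prop :=
  ∃ n m : ℕ, 0 < m ∧ F^[n + m] z = F^[n] z

/-- `f = (f_1, …, f_N)` is a regular endomorphism of `𝔸^N` of algebraic degree `d`:
every `f_j` has total degree `d` and the common zero locus of the top-degree homogeneous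
parts `f_j^+` is `{0}`. -/
def IsRegularEndo {N : ℕ} (f : Fin N → MvPolynomial (Fin N) ℂ) (d : ℕ) : Prop :=
  (∀ j, (f j).totalDegree = d) ∧
  ∀ z : Fin N → ℂ,
    (∀ j, MvPolynomial.eval z (MvPolynomial.homogeneousComponent d (f j)) = 0) → z = 0

open MvPolynomial

namespace MvPolynomial

variable {σ R : Type*}

theorem IsHomogeneous.eval_smul [Fintype σ] [CommSemiring R] {p : MvPolynomial σ R} {n : ℕ}
    (hp : p.IsHomogeneous n) (c : R) (z : σ → R) :
    eval (c • z) p = c ^ n * eval z p := by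
  rw [eval_eq', eval_eq', Finset.mul_sum]
  refine Finset.sum_congr rfl fun m hm => ?_
  have hdeg : ∑ i, m i = n := by
    simpa [Finsupp.weight_apply, Finsupp.sum_fintype] using hp (mem_support_iff.mp hm)
  simp only [Pi.smul_apply, smul_eq_mul, mul_pow, Finset.prod_mul_distrib,
    Finset.prod_pow_eq_pow_sum, hdeg]
  ring

theorem norm_eval_le_of_totalDegree_le [Fintype σ] [NormedCommRing R] [NormOneClass R]
    {p : MvPolynomial σ R} {k : ℕ} (hp : p.totalDegree ≤ k) {z : σ → R} (hz : 1 ≤ ‖z‖) :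
    ‖eval z p‖ ≤ (∑ m ∈ p.support, ‖p.coeff m‖) * ‖z‖ ^ k := by
  rw [eval_eq', Finset.sum_mul]
  refine (norm_sum_le _ _).trans (Finset.sum_le_sum fun m hm => ?_)
  have hmk : ∑ i, m i ≤ k := by
    simpa [Finsupp.sum_fintype] using (le_totalDegree hm).trans hp
  calc ‖p.coeff m * ∏ i, z i ^ m i‖ ≤ ‖p.coeff m‖ * ∏ i, ‖z‖ ^ m i := by
        refine (norm_mul_le _ _).trans (mul_le_mul_of_nonneg_left ?_ (norm_nonneg _))
        refine (Finset.norm_prod_le _ _).trans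
          (Finset.prod_le_prod (fun _ _ => norm_nonneg _) fun i _ => ?_)
        exact (norm_pow_le _ _).trans (pow_le_pow_left₀ (norm_nonneg _) (norm_le_pi_norm z i) _)
    _ ≤ ‖p.coeff m‖ * ‖z‖ ^ k := by
        rw [Finset.prod_pow_eq_pow_sum]
        exact mul_le_mul_of_nonneg_left (pow_le_pow_right₀ hz hmk) (norm_nonneg _)

theorem totalDegree_sub_homogeneousComponent_lt [CommRing R] {p : MvPolynomial σ R} {n : ℕ}
    (hp : p.totalDegree ≤ n) (hn : 0 < n) :
    (p - homogeneousComponent n p).totalDegree < n := by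
  refine (Finset.sup_lt_iff hn).2 fun m hm => ?_
  rw [mem_support_iff, coeff_sub, coeff_homogeneousComponent] at hm
  split_ifs at hm with hmn
  · exact absurd (sub_self _) hm
  · exact lt_of_le_of_ne ((le_totalDegree (mem_support_iff.2 (by simpa using hm))).trans hp) hmn

end MvPolynomial

theorem exists_pos_mul_norm_pow_le_norm {𝕜 E F : Type*} [RCLike 𝕜] [NormedAddCommGroup E]
    [NormedSpace 𝕜 E] [ProperSpace E] [NormedAddCommGroup F] [NormedSpace 𝕜 F]
    {g : E → F} {d : ℕ} (hd : d ≠ 0) (hg : Continuous g)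
    (hhom : ∀ (c : 𝕜) z, g (c • z) = c ^ d • g z) (hzero : ∀ z, g z = 0 → z = 0) :
    ∃ c > 0, ∀ z, c * ‖z‖ ^ d ≤ ‖g z‖ := by
  have hpos : ∀ u ∈ Metric.sphere (0 : E) 1, 0 < ‖g u‖ := fun u hu =>
    norm_pos_iff.2 fun h => by simp [hzero u h] at hu
  obtain ⟨c, hc, hcu⟩ := (isCompact_sphere (0 : E) 1).exists_forall_le' hg.norm.continuousOn hpos
  refine ⟨c, hc, fun z => ?_⟩
  rcases eq_or_ne z 0 with rfl | hz
  · simp [zero_pow hd]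
  have hnz : (‖z‖ : 𝕜) ≠ 0 := RCLike.ofReal_ne_zero.2 (norm_ne_zero_iff.2 hz)
  obtain ⟨u, hu, hzu⟩ : ∃ u ∈ Metric.sphere (0 : E) 1, z = (‖z‖ : 𝕜) • u :=
    ⟨(‖z‖ : 𝕜)⁻¹ • z, by simp [norm_smul, hz], by simp [smul_smul, hnz]⟩
  calc c * ‖z‖ ^ d ≤ ‖g u‖ * ‖z‖ ^ d := by gcongr; exact hcu u hu
    _ = ‖(‖z‖ : 𝕜) ^ d • g u‖ := by
      rw [norm_smul, norm_pow, RCLike.norm_ofReal, abs_norm, mul_comm]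
    _ = ‖g z‖ := by rw [← hhom, ← hzu]

theorem exists_norm_lt_norm_apply_of_dominant {E : Type*} [SeminormedAddCommGroup E]
    {F g : E → E} {c C : ℝ} {d : ℕ} (hc : 0 < c) (hd : 2 ≤ d)
    (hg : ∀ z, c * ‖z‖ ^ d ≤ ‖g z‖) (hFg : ∀ z, 1 ≤ ‖z‖ → ‖F z - g z‖ ≤ C * ‖z‖ ^ (d - 1)) :
    ∃ R, ∀ z, R ≤ ‖z‖ → ‖z‖ < ‖F z‖ := by
  refine ⟨max 1 ((C + 2) / c), fun z hz => ?_⟩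
  set r := ‖z‖
  -- `c r ^ d - C r ^ (d - 1) = r ^ (d - 1) (c r - C) ≥ 2 r ^ (d - 1) ≥ 2 r`
  have hr : 1 ≤ r := (le_max_left _ _).trans hz
  have hcr : C + 2 ≤ c * r := (div_le_iff₀' hc).1 ((le_max_right _ _).trans hz)
  have hrd : r ≤ r ^ (d - 1) := le_self_pow₀ hr (by omega)
  have hsplit : r ^ d = r ^ (d - 1) * r := by rw [← pow_succ]; congr 1; omega
  calc r < 2 * r ^ (d - 1) := by linarith
    _ ≤ c * r ^ d - C * r ^ (d - 1) := by rw [hsplit]; nlinarith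
    _ ≤ ‖g z‖ - ‖F z - g z‖ := sub_le_sub (hg z) (hFg z hr)
    _ ≤ ‖F z‖ := by linarith [norm_sub_norm_le (g z) (F z), norm_sub_rev (g z) (F z)]

theorem norm_lt_of_isPreperiodicPt {X : Type*} [Norm X] {F : X → X} {R : ℝ}
    (hF : ∀ z, R ≤ ‖z‖ → ‖z‖ < ‖F z‖) {x : X} (hx : IsPreperiodicPt F x) : ‖x‖ < R := by
  by_contra! hR
  have horbit : ∀ k, R ≤ ‖F^[k] x‖ := by
    intro k
    induction k with
    | zero => exact hR
    | succ k ih => rw [Function.iterate_succ_apply']; exact ih.trans (hF _ ih).le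
  have hmono : StrictMono fun k => ‖F^[k] x‖ := strictMono_nat_of_lt_succ fun k => by
    simpa only [Function.iterate_succ_apply'] using hF _ (horbit k)
  obtain ⟨n, m, hm, hnm⟩ := hx
  exact (hmono (Nat.lt_add_of_pos_right hm)).ne' (congrArg norm hnm)

theorem continuous_evalMap {N : ℕ} (f : Fin N → MvPolynomial (Fin N) ℂ) :
    Continuous (evalMap f) :=
  continuous_pi fun j => continuous_eval (f j)

theorem evalMap_smul_of_isHomogeneous {N d : ℕ} {f : Fin N → MvPolynomial (Fin N) ℂ}
    (hf : ∀ j, (f j).IsHomogeneous d) (c : ℂ) (z : Fin N → ℂ) :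
    evalMap f (c • z) = c ^ d • evalMap f z :=
  funext fun j => (hf j).eval_smul c z

theorem evalMap_sub {N : ℕ} (f g : Fin N → MvPolynomial (Fin N) ℂ) (z : Fin N → ℂ) :
    evalMap f z - evalMap g z = evalMap (f - g) z :=
  funext fun j => by simp [evalMap]

theorem exists_norm_evalMap_le_of_totalDegree_le {N k : ℕ} {f : Fin N → MvPolynomial (Fin N) ℂ}
    (hf : ∀ j, (f j).totalDegree ≤ k) :
    ∃ C, ∀ z, 1 ≤ ‖z‖ → ‖evalMap f z‖ ≤ C * ‖z‖ ^ k := by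
  set coeffSum := fun j => ∑ m ∈ (f j).support, ‖(f j).coeff m‖
  refine ⟨∑ j, coeffSum j, fun z hz => (pi_norm_le_iff_of_nonneg (by positivity)).2 fun j => ?_⟩
  refine (norm_eval_le_of_totalDegree_le (hf j) hz).trans ?_
  gcongr
  exact Finset.single_le_sum (f := coeffSum) (fun i _ => by positivity) (Finset.mem_univ j)

theorem preperiodic_points_bounded_general
    (N : ℕ)
    (f : Fin N → MvPolynomial (Fin N) ℂ)
    (d : ℕ) (hd : 2 ≤ d) (hreg : IsRegularEndo f d) :
    ∃ R : ℝ, 0 < R ∧ ∀ x : Fin N → ℂ, IsPreperiodicPt (evalMap f) x → ‖x‖ ≤ R := by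
  set fh := fun j => homogeneousComponent d (f j)
  have hfh : ∀ j, (fh j).IsHomogeneous d := fun j => homogeneousComponent_isHomogeneous d (f j)
  obtain ⟨c, hc, hlow⟩ := exists_pos_mul_norm_pow_le_norm (𝕜 := ℂ) (by omega)
    (continuous_evalMap fh) (evalMap_smul_of_isHomogeneous hfh) fun z hz => hreg.2 z (congrFun hz)
  obtain ⟨C, hC⟩ := exists_norm_evalMap_le_of_totalDegree_le (k := d - 1) (f := f - fh) fun j =>
    Nat.le_sub_one_of_lt (totalDegree_sub_homogeneousComponent_lt (hreg.1 j).le (by omega))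
  obtain ⟨R, hR⟩ := exists_norm_lt_norm_apply_of_dominant hc hd hlow fun z hz => by
    rw [evalMap_sub]; exact hC z hz
  exact ⟨max R 1, by positivity,
    fun x hx => (norm_lt_of_isPreperiodicPt hR hx).le.trans (le_max_left _ _)⟩

/-- The set of preperiodic points of a regular endomorphism of `ℂ^N` of algebraic degree
`d ≥ 2` is bounded. -/
theorem preperiodic_points_bounded
    (N : ℕ) (hN : 1 ≤ N)
    (f : Fin N → MvPolynomial (Fin N) ℂ)
    (d : ℕ) (hd : 2 ≤ d) (hreg : IsRegularEndo f d) :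
    ∃ R : ℝ, 0 < R ∧ ∀ x : Fin N → ℂ, IsPreperiodicPt (evalMap f) x → ‖x‖ ≤ R :=
  preperiodic_points_bounded_general N f d hd hreg
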